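/- Let Δ be a nondegenerate tetrahedron in ℝ³ with face areas A_1, A_2, A_3, A_4 and exterior dihedral angles α_{ij} between faces i and j. Then A_4²·(1 − cos²α_{12} − cos²α_{14} − cos²α_{24} − 2cos α_{12} cos α_{24} cos α_{14}) = A_3²·(1 − cos²α_{12} − cos²α_{13} − cos²α_{23} − 2cos α_{12} cos α_{23} cos α_{13}). -/

import Mathlib

open MeasureTheory RealInnerProductSpace Real

noncomputable def faceArea (v : Fin 4 → EuclideanSpace ℝ (Fin 3)) (i : Fin 4) : ℝ :=
  (μH[(2 : ℝ)] (convexHull ℝ (v '' {i}ᶜ))).toReal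

def IsOutwardNormal (v : Fin 4 → EuclideanSpace ℝ (Fin 3)) (i : Fin 4)
    (u : EuclideanSpace ℝ (Fin 3)) : Prop :=
  ‖u‖ = 1 ∧ (∀ j k, j ≠ i → k ≠ i → ⟪u, v j - v k⟫ = 0) ∧
    (∀ j, j ≠ i → ⟪u, v i - v j⟫ < 0)

/-!
With `D` the signed volume of the tetrahedron, the outward unit normal of face `i` is
`sign D • n_i / ‖n_i‖`, where `n_i` is the cross product of two edge vectors of the face taken
in a suitable order, and the area of face `i` is `‖n_i‖` times the Hausdorff measure of a fixed
reference triangle. Since the four `n_i` sum to zero, Minkowski's relation `∑ A_i f_i = 0`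
follows. Hence `A_3 f_3 ≡ -A_2 f_2` modulo `span {f_0, f_1}`, and the Gram determinant
`z ↦ det G(f_0, f_1, z)`, which is quadratic in `z` and invariant under adding elements of that
span, gives `A_3² det G(f_0, f_1, f_3) = A_2² det G(f_0, f_1, f_2)`. For unit vectors with
`⟪f_i, f_j⟫ = -cos α_ij` these Gram determinants are the two bracketed factors.
-/

open Matrix Module
open scoped Pointwise

local notation "E³" => EuclideanSpace ℝ (Fin 3)

noncomputable def stdTriangle : Set (EuclideanSpace ℝ (Fin 2)) :=
  convexHull ℝ {0, EuclideanSpace.single 0 1, EuclideanSpace.single 1 1}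

section InnerProductSpace

variable {E : Type*} [NormedAddCommGroup E] [InnerProductSpace ℝ E]

lemma hausdorffMeasure_convexHull_triple [MeasurableSpace E] [BorelSpace E] (p q r : E) :
    μH[2] (convexHull ℝ {p, q, r}) =
      ENNReal.ofReal √(‖q - p‖ ^ 2 * ‖r - p‖ ^ 2 - ⟪q - p, r - p⟫ ^ 2) * μH[2] stdTriangle := by
  let L : EuclideanSpace ℝ (Fin 2) →ₗ[ℝ] E :=
    (EuclideanSpace.basisFun (Fin 2) ℝ).toBasis.constr ℝ ![q - p, r - p]
  have h0 : L (EuclideanSpace.single 0 1) = q - p := by simp [L]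
  have h1 : L (EuclideanSpace.single 1 1) = r - p := by simp [L]
  have himage : convexHull ℝ {p, q, r} = p +ᵥ L '' stdTriangle := by
    rw [stdTriangle, L.image_convexHull, ← convexHull_vadd]
    simp [Set.image_insert_eq, Set.vadd_set_insert, h0, h1]
  have hnormDet : L.normDet = √(‖q - p‖ ^ 2 * ‖r - p‖ ^ 2 - ⟪q - p, r - p⟫ ^ 2) := by
    rw [← Real.sqrt_sq L.normDet_nonneg]
    have := L.normDet_sq_eq_det_gram (EuclideanSpace.basisFun (Fin 2) ℝ)
    simp only [RCLike.ofReal_real_eq_id, id] at this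
    rw [this, Matrix.det_fin_two]
    simp [Matrix.gram_apply, real_inner_comm, h0, h1, ← sq]
  have hdim : (2 : ℝ) = finrank ℝ (EuclideanSpace ℝ (Fin 2)) := by simp
  rw [himage, hausdorffMeasure_vadd _ (Or.inl zero_le_two), hdim, L.hausdorffMeasure_image,
    hnormDet]

lemma norm_smul_eq_sign_smul {u n w : E} {t D : ℝ} (hu : ‖u‖ = 1) (ht : u = t • n)
    (hw : ⟪u, w⟫ < 0) (hn : ⟪n, w⟫ = -D) : ‖n‖ • u = Real.sign D • n := by
  have hnorm : |t| * ‖n‖ = 1 := by rw [← hu, ht, norm_smul, Real.norm_eq_abs]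
  have htD : 0 < t * D := by
    rw [ht, real_inner_smul_left, hn] at hw; linarith
  rw [ht, smul_smul]
  congr 1
  rcases lt_trichotomy D 0 with hD | rfl | hD
  · rw [Real.sign_of_neg hD, abs_of_neg (neg_of_mul_pos_left htD hD.le)] at *; linarith
  · simp at htD
  · rw [Real.sign_of_pos hD, abs_of_pos (pos_of_mul_pos_left htD hD.le)] at *; linarith

lemma det_gram_smul_add (x y z : E) (a b c : ℝ) :
    (gram ℝ ![x, y, a • x + b • y + c • z]).det = c ^ 2 * (gram ℝ ![x, y, z]).det := by
  simp only [det_fin_three, gram_apply, Fin.isValue, cons_val_zero, cons_val_one, cons_val,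
    inner_add_left, inner_add_right, real_inner_smul_left, real_inner_smul_right,
    real_inner_comm x y, real_inner_comm x z, real_inner_comm y z]
  ring

lemma det_gram_three_of_norm_eq_one {x y z : E} (hx : ‖x‖ = 1) (hy : ‖y‖ = 1) (hz : ‖z‖ = 1) :
    (gram ℝ ![x, y, z]).det =
      1 - ⟪x, y⟫ ^ 2 - ⟪x, z⟫ ^ 2 - ⟪y, z⟫ ^ 2 + 2 * ⟪x, y⟫ * ⟪y, z⟫ * ⟪x, z⟫ := by
  simp [det_fin_three, gram_apply, hx, hy, hz,
    real_inner_comm x y, real_inner_comm x z, real_inner_comm y z]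
  ring

lemma sq_mul_det_gram_eq_of_sum_eq_zero {u : Fin 4 → E} {a : Fin 4 → ℝ}
    (h : ∑ i, a i • u i = 0) :
    a 3 ^ 2 * (gram ℝ ![u 0, u 1, u 3]).det = a 2 ^ 2 * (gram ℝ ![u 0, u 1, u 2]).det := by
  have h3 : a 3 • u 3 = (-a 0) • u 0 + (-a 1) • u 1 + (-a 2) • u 2 := by
    rw [Fin.sum_univ_four] at h
    linear_combination (norm := module) h
  have h3' := det_gram_smul_add (u 0) (u 1) (u 3) 0 0 (a 3)
  have h2' := det_gram_smul_add (u 0) (u 1) (u 2) (-a 0) (-a 1) (-a 2)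
  rw [zero_smul, zero_smul, zero_add, zero_add, h3] at h3'
  linear_combination h2' - h3'

end InnerProductSpace

noncomputable def cross3 (x y : E³) : E³ := WithLp.toLp 2 (WithLp.ofLp x ⨯₃ WithLp.ofLp y)

lemma inner_eq_ofLp_dotProduct {ι : Type*} [Fintype ι] (x y : EuclideanSpace ℝ ι) :
    ⟪x, y⟫ = WithLp.ofLp x ⬝ᵥ WithLp.ofLp y := by
  simp [EuclideanSpace.inner_eq_star_dotProduct, dotProduct_comm]

lemma norm_cross3_sq (x y : E³) : ‖cross3 x y‖ ^ 2 = ‖x‖ ^ 2 * ‖y‖ ^ 2 - ⟪x, y⟫ ^ 2 := by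
  simp only [← real_inner_self_eq_norm_sq, inner_eq_ofLp_dotProduct, cross3, cross_dot_cross]
  rw [dotProduct_comm (WithLp.ofLp y) (WithLp.ofLp x)]
  ring

lemma inner_cross3_self_smul_of_orthogonal {x y u : E³} (hx : ⟪u, x⟫ = 0) (hy : ⟪u, y⟫ = 0) :
    ⟪cross3 x y, cross3 x y⟫ • u = ⟪u, cross3 x y⟫ • cross3 x y := by
  set n := cross3 x y
  have hnu : WithLp.ofLp n ⨯₃ WithLp.ofLp u = 0 := by
    simp only [n, cross3, cross_cross_eq_smul_sub_smul]
    rw [inner_eq_ofLp_dotProduct] at hx hy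
    rw [dotProduct_comm, hx, dotProduct_comm, hy]
    simp
  have := cross_cross_eq_smul_sub_smul' (WithLp.ofLp n) (WithLp.ofLp n) (WithLp.ofLp u)
  rw [hnu, map_zero, eq_comm, sub_eq_zero] at this
  simp only [inner_eq_ofLp_dotProduct]
  apply (WithLp.linearEquiv 2 ℝ (Fin 3 → ℝ)).injective
  simpa [dotProduct_comm] using this.symm

lemma inner_sub_cross3_ne_zero {v : Fin 4 → E³} (hv : AffineIndependent ℝ v) :
    ⟪v 1 - v 0, cross3 (v 2 - v 0) (v 3 - v 0)⟫ ≠ 0 := by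
  have hli : LinearIndependent ℝ ![v 1 - v 0, v 2 - v 0, v 3 - v 0] := by
    rw [affineIndependent_iff_linearIndependent_vsub ℝ _ (0 : Fin 4),
      ← linearIndependent_equiv (finSuccAboveEquiv (0 : Fin 4))] at hv
    convert! hv
    funext i; fin_cases i <;> rfl
  have hrows := hli.map' (WithLp.linearEquiv 2 ℝ (Fin 3 → ℝ)).toLinearMap (LinearEquiv.ker _)
  rw [inner_eq_ofLp_dotProduct, cross3, WithLp.ofLp_toLp, triple_product_eq_det]
  refine (isUnit_iff_isUnit_det _).1 (linearIndependent_rows_iff_isUnit.1 ?_) |>.ne_zero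
  convert! hrows
  funext i; fin_cases i <;> rfl

lemma faceArea_smul_outwardNormal_eq {v : Fin 4 → E³} {i j k l : Fin 4}
    (hface : ({i}ᶜ : Set (Fin 4)) = {j, k, l}) {u : E³} (hu : IsOutwardNormal v i u) {D : ℝ}
    (hD : D ≠ 0) (htriple : ⟪cross3 (v k - v j) (v l - v j), v i - v j⟫ = -D) :
    faceArea v i • u =
      ((μH[2] stdTriangle).toReal * Real.sign D) • cross3 (v k - v j) (v l - v j) := by
  set n := cross3 (v k - v j) (v l - v j)
  have hne : ∀ m ∈ ({j, k, l} : Set (Fin 4)), m ≠ i := fun m hm => by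
    rw [← hface] at hm; exact hm
  obtain ⟨hunit, hperp, hout⟩ := hu
  have harea : faceArea v i = (μH[2] stdTriangle).toReal * ‖n‖ := by
    rw [faceArea, hface, Set.image_insert_eq, Set.image_insert_eq, Set.image_singleton,
      hausdorffMeasure_convexHull_triple, ← norm_cross3_sq, Real.sqrt_sq (norm_nonneg _),
      ENNReal.toReal_mul, ENNReal.toReal_ofReal (norm_nonneg _), mul_comm]
  have hn : n ≠ 0 := by
    rintro h
    rw [h, inner_zero_left] at htriple
    exact hD (by linarith)
  have hpar := inner_cross3_self_smul_of_orthogonal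
    (hperp k j (hne k (by simp)) (hne j (by simp))) (hperp l j (hne l (by simp)) (hne j (by simp)))
  have ht : u = (⟪u, n⟫ / ⟪n, n⟫) • n := by
    rw [div_eq_inv_mul, mul_smul, ← hpar, smul_smul, inv_mul_cancel₀ (inner_self_ne_zero.2 hn),
      one_smul]
  rw [harea, mul_smul, norm_smul_eq_sign_smul hunit ht (hout j (hne j (by simp))) htriple,
    mul_smul]

lemma sum_faceArea_smul_eq_zero {v : Fin 4 → E³} (hv : AffineIndependent ℝ v)
    {f : Fin 4 → E³} (hf : ∀ i, IsOutwardNormal v i (f i)) :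
    ∑ i, faceArea v i • f i = 0 := by
  set D := ⟪v 1 - v 0, cross3 (v 2 - v 0) (v 3 - v 0)⟫
  have hD : D ≠ 0 := inner_sub_cross3_ne_zero hv
  obtain ⟨h0, h1, h2, h3⟩ :
      ⟪cross3 (v 2 - v 1) (v 3 - v 1), v 0 - v 1⟫ = -D ∧
      ⟪cross3 (v 3 - v 0) (v 2 - v 0), v 1 - v 0⟫ = -D ∧
      ⟪cross3 (v 1 - v 0) (v 3 - v 0), v 2 - v 0⟫ = -D ∧
      ⟪cross3 (v 2 - v 0) (v 1 - v 0), v 3 - v 0⟫ = -D := by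
    refine ⟨?_, ?_, ?_, ?_⟩ <;>
      simp [D, inner_eq_ofLp_dotProduct, cross3, cross_apply, dotProduct, Fin.sum_univ_three] <;>
      ring
  have hnormals : cross3 (v 2 - v 1) (v 3 - v 1) + cross3 (v 3 - v 0) (v 2 - v 0) +
      cross3 (v 1 - v 0) (v 3 - v 0) + cross3 (v 2 - v 0) (v 1 - v 0) = 0 := by
    ext m; fin_cases m <;> simp [cross3, cross_apply] <;> ring
  rw [Fin.sum_univ_four,
    faceArea_smul_outwardNormal_eq (by ext m; fin_cases m <;> simp) (hf 0) hD h0,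
    faceArea_smul_outwardNormal_eq (by ext m; fin_cases m <;> simp) (hf 1) hD h1,
    faceArea_smul_outwardNormal_eq (by ext m; fin_cases m <;> simp) (hf 2) hD h2,
    faceArea_smul_outwardNormal_eq (by ext m; fin_cases m <;> simp) (hf 3) hD h3,
    ← smul_add, ← smul_add, ← smul_add, hnormals, smul_zero]

/-- Faces `1,2,3,4` are indexed by `0,1,2,3 : Fin 4`. -/
theorem tetrahedron_law_of_sines (v : Fin 4 → EuclideanSpace ℝ (Fin 3))
    (hv : AffineIndependent ℝ v)
    (f : Fin 4 → EuclideanSpace ℝ (Fin 3)) (hf : ∀ i, IsOutwardNormal v i (f i))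
    (α : Fin 4 → Fin 4 → ℝ) (hα : ∀ i j, i ≠ j → ⟪f i, f j⟫ = -Real.cos (α i j)) :
    faceArea v 3 ^ 2 *
        (1 - Real.cos (α 0 1) ^ 2 - Real.cos (α 0 3) ^ 2 - Real.cos (α 1 3) ^ 2 -
          2 * Real.cos (α 0 1) * Real.cos (α 1 3) * Real.cos (α 0 3)) =
      faceArea v 2 ^ 2 *
        (1 - Real.cos (α 0 1) ^ 2 - Real.cos (α 0 2) ^ 2 - Real.cos (α 1 2) ^ 2 -
          2 * Real.cos (α 0 1) * Real.cos (α 1 2) * Real.cos (α 0 2)) := by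
  have key := sq_mul_det_gram_eq_of_sum_eq_zero (sum_faceArea_smul_eq_zero hv hf)
  rw [det_gram_three_of_norm_eq_one (hf 0).1 (hf 1).1 (hf 3).1,
    det_gram_three_of_norm_eq_one (hf 0).1 (hf 1).1 (hf 2).1] at key
  simp only [hα _ _ (by decide : (0 : Fin 4) ≠ 1), hα _ _ (by decide : (0 : Fin 4) ≠ 2),
    hα _ _ (by decide : (0 : Fin 4) ≠ 3), hα _ _ (by decide : (1 : Fin 4) ≠ 2),
    hα _ _ (by decide : (1 : Fin 4) ≠ 3)] at key
  linear_combination key
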